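/- arXiv:1901.03178 — 2 statements merged into one kernel-verified Lean document; each statement's English description precedes it below -/
import Mathlib

section
/- Let A be a Fréchet algebra and I a closed ideal of A. Then A is amenable modulo I if and only if its unitization A_e is amenable modulo I. -/
open Filter Topology

/-- The quotient `A/I` of a Fréchet algebra `(A, p_n)` by a closed two-sided
ideal `I`, presented abstractly: an algebra `Q` together with a surjective
algebra homomorphism `q : A → Q` whose kernel is `I`, equipped with the
quotient seminorms `p̂_n(q a) = inf {p_n (a + b) : b ∈ I}`. -/
structure FrechetQuot (A : Type*) [Ring A] [Algebra ℂ A]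
    (p : ℕ → RingSeminorm A) (I : Set A) where
  Q : Type*
  [ringQ : Ring Q]
  [algQ : Algebra ℂ Q]
  q : A →ₐ[ℂ] Q
  surj : Function.Surjective q
  ker_eq : ∀ a : A, q a = 0 ↔ a ∈ I
  pq : ℕ → Q → ℝ
  pq_eq : ∀ (n : ℕ) (a : A), pq n (q a) = sInf ((fun b => p n (a + b)) '' I)

attribute [instance] FrechetQuot.ringQ FrechetQuot.algQ

/-- The projective tensor product `(A/I) ⊗̂ (A/I)` of the quotient of a
Fréchet algebra, presented abstractly: a `ℂ`-vector space `T` with a bilinear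
map `tmul`, the projective tensor seminorms `r̂_n`, the natural `A`-bimodule
actions `a·(x ⊗ y) = (q a * x) ⊗ y`, `(x ⊗ y)·a = x ⊗ (y * q a)`, and the
diagonal map `π : x ⊗ y ↦ x * y`. -/
structure FrechetTensorSq {A : Type*} [Ring A] [Algebra ℂ A]
    {p : ℕ → RingSeminorm A} {I : Set A} (QD : FrechetQuot A p I) where
  T : Type*
  [grpT : AddCommGroup T]
  [modT : Module ℂ T]
  tmul : QD.Q →ₗ[ℂ] QD.Q →ₗ[ℂ] T
  span : ∀ M : T, M ∈ Submodule.span ℂ (Set.range fun z : QD.Q × QD.Q => tmul z.1 z.2)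
  r : ℕ → T → ℝ
  -- each `r̂_n` is a seminorm ...
  r_nonneg : ∀ (n : ℕ) (M : T), 0 ≤ r n M
  r_zero : ∀ n : ℕ, r n 0 = 0
  r_neg : ∀ (n : ℕ) (M : T), r n (-M) = r n M
  r_add : ∀ (n : ℕ) (M N : T), r n (M + N) ≤ r n M + r n N
  -- ... given by the projective tensor formula for the seminorms `p̂_n`
  r_eq : ∀ (n : ℕ) (M : T),
    r n M = sInf {c : ℝ | ∃ (k : ℕ) (x y : Fin k → QD.Q),
      M = ∑ i, tmul (x i) (y i) ∧ c = ∑ i, QD.pq n (x i) * QD.pq n (y i)}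
  actL : A → T →ₗ[ℂ] T
  actR : A → T →ₗ[ℂ] T
  actL_tmul : ∀ (a : A) (x y : QD.Q), actL a (tmul x y) = tmul (QD.q a * x) y
  actR_tmul : ∀ (a : A) (x y : QD.Q), actR a (tmul x y) = tmul x (y * QD.q a)
  diag : T →ₗ[ℂ] QD.Q
  diag_tmul : ∀ x y : QD.Q, diag (tmul x y) = x * y

attribute [instance] FrechetTensorSq.grpT FrechetTensorSq.modT

/-- A locally bounded approximate diagonal modulo `I` for a Fréchet algebra
`(A, p_n)`: a family `{C_n}` of positive reals such that for each finite
`F ⊆ A \ I`, each `n`, and each `ε > 0` there is `M ∈ (A/I) ⊗̂ (A/I)` with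
`r̂_n(M) ≤ C_n`, `r̂_n(a·M − M·a) < ε` for all `a ∈ F`, and
`p̂_n(a·π(M) − ã) < ε` for all `a ∈ A`. -/
def LocallyBddApproxDiagMod {A : Type*} [Ring A] [Algebra ℂ A]
    {p : ℕ → RingSeminorm A} {I : Set A} (QD : FrechetQuot A p I)
    (TS : FrechetTensorSq QD) : Prop :=
  ∃ C : ℕ → ℝ, (∀ n : ℕ, 0 < C n) ∧
    ∀ F : Finset A, (↑F : Set A) ⊆ Iᶜ → ∀ n : ℕ, ∀ ε > (0:ℝ),
      ∃ M : TS.T, TS.r n M ≤ C n ∧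
        (∀ a ∈ F, TS.r n (TS.actL a M - TS.actR a M) < ε) ∧
        (∀ a : A, QD.pq n (QD.q a * TS.diag M - QD.q a) < ε)

/-- Amenability modulo a closed ideal `I` of a Fréchet algebra `(A, p_n)`:
for every Banach `A`-bimodule `E` (with jointly continuous actions `l`, `r`)
annihilated by `I` on both sides, every continuous derivation `D : A → E*` is
inner on `A \ I`. -/
def AmenableModulo (A : Type*) [Ring A] [Algebra ℂ A]
    (p : ℕ → RingSeminorm A) (I : Set A) : Prop :=
  ∀ (E : Type) [NormedAddCommGroup E] [NormedSpace ℂ E] [CompleteSpace E]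
    (l r : A →ₗ[ℂ] E →L[ℂ] E),
    -- bimodule axioms: `l a x = a·x`, `r a x = x·a`
    (∀ (a b : A) (x : E), l (a * b) x = l a (l b x)) →
    (∀ (a b : A) (x : E), r (a * b) x = r b (r a x)) →
    (∀ (a b : A) (x : E), l a (r b x) = r b (l a x)) →
    -- continuity of the actions with respect to the seminorms of `A`
    (∃ (n : ℕ) (c : ℝ), ∀ (a : A) (x : E), ‖l a x‖ ≤ c * p n a * ‖x‖) →
    (∃ (n : ℕ) (c : ℝ), ∀ (a : A) (x : E), ‖r a x‖ ≤ c * p n a * ‖x‖) →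
    -- `I·E = E·I = 0`
    (∀ a ∈ I, ∀ x : E, l a x = 0 ∧ r a x = 0) →
    -- every continuous derivation `D : A → E*` ...
    ∀ D : A →ₗ[ℂ] (E →L[ℂ] ℂ),
      (∃ (n : ℕ) (c : ℝ), ∀ a : A, ‖D a‖ ≤ c * p n a) →
      (∀ (a b : A) (x : E), D (a * b) x = D b (r a x) + D a (l b x)) →
      -- ... is inner on `A \ I`
      ∃ φ : E →L[ℂ] ℂ, ∀ a : A, a ∉ I → ∀ x : E, D a x = φ (r a x) - φ (l a x)

set_option maxHeartbeats 1000000 in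
/-- A Fréchet algebra `A` is amenable modulo a closed ideal `I`
if and only if its unitization `A_e = A ⊕ ℂ` (with the seminorms
`p_n^e(a, λ) = ‖λ‖ + p_n a` and with `I` embedded as a closed ideal) is
amenable modulo `I`. -/
theorem amenable_modulo_iff_unitization
    {A : Type*} [Ring A] [Algebra ℂ A]
    (p : ℕ → RingSeminorm A) (hmono : ∀ (n : ℕ) (a : A), p n a ≤ p (n + 1) a)
    (I : Set A)
    (hIclosed : ∀ a : A, (∀ n : ℕ, ∀ ε > (0:ℝ), ∃ b ∈ I, p n (a - b) < ε) → a ∈ I)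
    -- the seminorms of the unitization `A_e`
    (pe : ℕ → RingSeminorm (Unitization ℂ A))
    (hpe : ∀ (n : ℕ) (x : Unitization ℂ A), pe n x = ‖x.fst‖ + p n x.snd) :
    AmenableModulo A p I ↔
      AmenableModulo (Unitization ℂ A) pe
        ((Unitization.inr : A → Unitization ℂ A) '' I) := by
  
  have pnn : ∀ (n : ℕ) (a : A), 0 ≤ p n a := fun n a => apply_nonneg (p n) a
  constructor
  · -- A amenable mod I ⇒ A_e amenable mod inr '' I
    intro hA E _ _ _ L R hL hR hCm hLb hRb hAnn D hDb hDer
    classical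
    let lm : A →ₗ[ℂ] (E →L[ℂ] E) :=
      { toFun := fun a => L (Unitization.inr a)
        map_add' := fun a b => by simp only [Unitization.inr_add, map_add]
        map_smul' := fun c a => by simp only [Unitization.inr_smul, map_smul, RingHom.id_apply] }
    let rm : A →ₗ[ℂ] (E →L[ℂ] E) :=
      { toFun := fun a => R (Unitization.inr a)
        map_add' := fun a b => by simp only [Unitization.inr_add, map_add]
        map_smul' := fun c a => by simp only [Unitization.inr_smul, map_smul, RingHom.id_apply] }
    let dm : A →ₗ[ℂ] (E →L[ℂ] ℂ) :=
      { toFun := fun a => D (Unitization.inr a)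
        map_add' := fun a b => by simp only [Unitization.inr_add, map_add]
        map_smul' := fun c a => by simp only [Unitization.inr_smul, map_smul, RingHom.id_apply] }
    have hl' : ∀ (a b : A) (x : E), lm (a * b) x = lm a (lm b x) := by
      intro a b x
      show L (Unitization.inr (a*b)) x = L (Unitization.inr a) (L (Unitization.inr b) x)
      rw [Unitization.inr_mul]; exact hL _ _ x
    have hr' : ∀ (a b : A) (x : E), rm (a * b) x = rm b (rm a x) := by
      intro a b x
      show R (Unitization.inr (a*b)) x = R (Unitization.inr b) (R (Unitization.inr a) x)
      rw [Unitization.inr_mul]; exact hR _ _ x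
    have hcm' : ∀ (a b : A) (x : E), lm a (rm b x) = rm b (lm a x) := fun a b x => hCm _ _ x
    have hbl : ∃ (n : ℕ) (c : ℝ), ∀ (a : A) (x : E), ‖lm a x‖ ≤ c * p n a * ‖x‖ := by
      obtain ⟨n, c, hc⟩ := hLb
      refine ⟨n, c, fun a x => ?_⟩
      have := hc (Unitization.inr a) x
      rwa [hpe, Unitization.fst_inr, Unitization.snd_inr, norm_zero, zero_add] at this
    have hbr : ∃ (n : ℕ) (c : ℝ), ∀ (a : A) (x : E), ‖rm a x‖ ≤ c * p n a * ‖x‖ := by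
      obtain ⟨n, c, hc⟩ := hRb
      refine ⟨n, c, fun a x => ?_⟩
      have := hc (Unitization.inr a) x
      rwa [hpe, Unitization.fst_inr, Unitization.snd_inr, norm_zero, zero_add] at this
    have hann' : ∀ a ∈ I, ∀ x : E, lm a x = 0 ∧ rm a x = 0 := by
      intro a ha x
      exact hAnn (Unitization.inr a) ⟨a, ha, rfl⟩ x
    have hdb' : ∃ (n : ℕ) (c : ℝ), ∀ a : A, ‖dm a‖ ≤ c * p n a := by
      obtain ⟨n, c, hc⟩ := hDb
      refine ⟨n, c, fun a => ?_⟩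
      have := hc (Unitization.inr a)
      rwa [hpe, Unitization.fst_inr, Unitization.snd_inr, norm_zero, zero_add] at this
    have hder' : ∀ (a b : A) (x : E), dm (a * b) x = dm b (rm a x) + dm a (lm b x) := by
      intro a b x
      show D (Unitization.inr (a*b)) x = _
      rw [Unitization.inr_mul]; exact hDer _ _ x
    obtain ⟨φ₀, hφ₀'⟩ := hA E lm rm hl' hr' hcm' hbl hbr hann' dm hdb' hder'
    have hφ₀ : ∀ a ∉ I, ∀ x : E, D (Unitization.inr a) x
        = φ₀ (R (Unitization.inr a) x) - φ₀ (L (Unitization.inr a) x) :=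
      fun a ha x => hφ₀' a ha x
    -- operator identities
    have hP2 : ∀ x : E, L 1 (L 1 x) = L 1 x := by
      intro x; have := hL 1 1 x; rw [one_mul] at this; exact this.symm
    have hQ2 : ∀ x : E, R 1 (R 1 x) = R 1 x := by
      intro x; have := hR 1 1 x; rw [one_mul] at this; exact this.symm
    have hPl : ∀ (a : A) (x : E), L 1 (L (Unitization.inr a) x) = L (Unitization.inr a) x := by
      intro a x; have := hL 1 (Unitization.inr a) x; rw [one_mul] at this; exact this.symm
    have hlP : ∀ (a : A) (x : E), L (Unitization.inr a) (L 1 x) = L (Unitization.inr a) x := by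
      intro a x; have := hL (Unitization.inr a) 1 x; rw [mul_one] at this; exact this.symm
    have hQr : ∀ (a : A) (x : E), R 1 (R (Unitization.inr a) x) = R (Unitization.inr a) x := by
      intro a x; have := hR (Unitization.inr a) 1 x; rw [mul_one] at this; exact this.symm
    have hrQ : ∀ (a : A) (x : E), R (Unitization.inr a) (R 1 x) = R (Unitization.inr a) x := by
      intro a x; have := hR 1 (Unitization.inr a) x; rw [one_mul] at this; exact this.symm
    have hPr : ∀ (a : A) (x : E), L 1 (R (Unitization.inr a) x) = R (Unitization.inr a) (L 1 x) :=
      fun a x => hCm 1 (Unitization.inr a) x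
    have hQl : ∀ (a : A) (x : E), R 1 (L (Unitization.inr a) x) = L (Unitization.inr a) (R 1 x) :=
      fun a x => (hCm (Unitization.inr a) 1 x).symm
    have hPQ : ∀ x : E, L 1 (R 1 x) = R 1 (L 1 x) := fun x => hCm 1 1 x
    -- derivation identities
    have hg : ∀ (a : A) (x : E),
        D (Unitization.inr a) x = D 1 (R (Unitization.inr a) x) + D (Unitization.inr a) (L 1 x) := by
      intro a x; have := hDer (Unitization.inr a) 1 x; rwa [mul_one] at this
    have hh : ∀ (a : A) (x : E),
        D (Unitization.inr a) x = D (Unitization.inr a) (R 1 x) + D 1 (L (Unitization.inr a) x) := by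
      intro a x; have := hDer 1 (Unitization.inr a) x; rwa [one_mul] at this
    have hCeq : ∀ x : E, D 1 x = D 1 (R 1 x) + D 1 (L 1 x) := by
      intro x; have := hDer 1 1 x; rwa [one_mul] at this
    -- the key extension of hφ₀ to all of A
    have hall : ∀ (a : A) (x : E), D (Unitization.inr a) x
        = φ₀ (R (Unitization.inr a) x) - φ₀ (L (Unitization.inr a) x) := by
      intro a x
      by_cases ha : a ∈ I
      · have hLa : ∀ y : E, L (Unitization.inr a) y = 0 := fun y => (hAnn _ ⟨a, ha, rfl⟩ y).1
        have hRa : ∀ y : E, R (Unitization.inr a) y = 0 := fun y => (hAnn _ ⟨a, ha, rfl⟩ y).2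
        have hda : D (Unitization.inr a) x = 0 := by
          have key : (∀ y : E, L (Unitization.inr (1:A)) y = 0) → D (Unitization.inr a) x = 0 := by
            intro h1
            have hthis := hDer (Unitization.inr a) (Unitization.inr (1:A)) x
            rw [← Unitization.inr_mul, mul_one] at hthis
            rw [hthis, hRa, h1, map_zero, map_zero, add_zero]
          by_cases h1 : (1:A) ∈ I
          · exact key (fun y => (hAnn _ ⟨1, h1, rfl⟩ y).1)
          · by_cases h2 : (1:A) + a ∈ I
            · refine key (fun y => ?_)
              have e1 := (hAnn _ ⟨1 + a, h2, rfl⟩ y).1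
              rw [Unitization.inr_add, map_add, ContinuousLinearMap.add_apply, hLa, add_zero] at e1
              exact e1
            · have e1 := hφ₀ 1 h1 x
              have e2 := hφ₀ (1 + a) h2 x
              rw [Unitization.inr_add, map_add, map_add, map_add,
                ContinuousLinearMap.add_apply, ContinuousLinearMap.add_apply,
                ContinuousLinearMap.add_apply, hLa, hRa, add_zero, add_zero] at e2
              linear_combination e2 - e1
        rw [hda, hRa, hLa, map_zero, sub_zero]
      · exact hφ₀ a ha x
    -- the implementing functional
    set φ : E →L[ℂ] ℂ := φ₀.comp ((L 1).comp (R 1)) + (D 1).comp (R 1) - (D 1).comp (L 1) with hφdef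
    have φapp : ∀ y : E, φ y = φ₀ (L 1 (R 1 y)) + D 1 (R 1 y) - D 1 (L 1 y) := fun y => rfl
    have hD1PQ : ∀ x : E, D 1 (L 1 (R 1 x)) = 0 := by
      intro x
      have h0 := hCeq (R 1 x)
      rw [hQ2] at h0
      linear_combination -h0
    have hunit : ∀ x : E, D 1 x = φ (R 1 x) - φ (L 1 x) := by
      intro x
      rw [φapp, φapp]
      simp only [hQ2, hP2, ← hPQ, hD1PQ]
      linear_combination hCeq x
    have hinr : ∀ (a : A) (x : E), D (Unitization.inr a) x
        = φ (R (Unitization.inr a) x) - φ (L (Unitization.inr a) x) := by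
      intro a x
      rw [φapp, φapp]
      simp only [hQr, hrQ, hQl, hPr, hPl, hlP, hP2, hQ2]
      have s1 := hall a (L 1 x)
      rw [hlP] at s1
      have s2 := hall a x
      have s3 := hall a (R 1 x)
      rw [hrQ] at s3
      have g1 := hg a x
      have g2 := hg a (L 1 x)
      rw [hP2] at g2
      have h1 := hh a x
      have h2 := hh a (R 1 x)
      rw [hQ2] at h2
      linear_combination s1 - s2 + s3 + g1 - g2 + h1 - h2
    refine ⟨φ, fun u hu x => ?_⟩
    have hdecomp : u = u.fst • (1 : Unitization ℂ A) + Unitization.inr u.snd := by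
      refine Unitization.ext ?_ ?_ <;>
        simp [Unitization.fst_add, Unitization.snd_add, Unitization.fst_smul,
          Unitization.snd_smul, Unitization.fst_one, Unitization.snd_one,
          Unitization.fst_inr, Unitization.snd_inr]
    have hDu : D u x = u.fst * D 1 x + D (Unitization.inr u.snd) x := by
      conv_lhs => rw [hdecomp]
      simp [map_add, map_smul, ContinuousLinearMap.add_apply,
        ContinuousLinearMap.smul_apply, smul_eq_mul]
    have hLu : L u x = u.fst • L 1 x + L (Unitization.inr u.snd) x := by
      conv_lhs => rw [hdecomp]
      simp [map_add, map_smul, ContinuousLinearMap.add_apply, ContinuousLinearMap.smul_apply]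
    have hRu : R u x = u.fst • R 1 x + R (Unitization.inr u.snd) x := by
      conv_lhs => rw [hdecomp]
      simp [map_add, map_smul, ContinuousLinearMap.add_apply, ContinuousLinearMap.smul_apply]
    rw [hDu, hLu, hRu, map_add, map_add, map_smul, map_smul, smul_eq_mul, smul_eq_mul]
    linear_combination u.fst * hunit x + hinr u.snd x
  · -- A_e amenable mod inr '' I ⇒ A amenable mod I
    intro hAe E _ _ _ l r hl hr hcm hlb hrb hann D hDb hder
    classical
    obtain ⟨n1, c1, hc1⟩ := hlb
    obtain ⟨n2, c2, hc2⟩ := hrb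
    obtain ⟨n3, c3, hc3⟩ := hDb
    let Lx : Unitization ℂ A →ₗ[ℂ] (E →L[ℂ] E) :=
      { toFun := fun u => u.fst • ContinuousLinearMap.id ℂ E + l u.snd
        map_add' := fun u v => by
          simp only [Unitization.fst_add, Unitization.snd_add, map_add, add_smul]
          abel
        map_smul' := fun c u => by
          simp only [Unitization.fst_smul, Unitization.snd_smul, map_smul, RingHom.id_apply,
            smul_add, smul_smul, smul_eq_mul] }
    let Rx : Unitization ℂ A →ₗ[ℂ] (E →L[ℂ] E) :=
      { toFun := fun u => u.fst • ContinuousLinearMap.id ℂ E + r u.snd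
        map_add' := fun u v => by
          simp only [Unitization.fst_add, Unitization.snd_add, map_add, add_smul]
          abel
        map_smul' := fun c u => by
          simp only [Unitization.fst_smul, Unitization.snd_smul, map_smul, RingHom.id_apply,
            smul_add, smul_smul, smul_eq_mul] }
    let Dx : Unitization ℂ A →ₗ[ℂ] (E →L[ℂ] ℂ) :=
      { toFun := fun u => D u.snd
        map_add' := fun u v => by simp [Unitization.snd_add]
        map_smul' := fun c u => by simp [Unitization.snd_smul] }
    have Lapp : ∀ (u : Unitization ℂ A) (x : E), Lx u x = u.fst • x + l u.snd x := fun u x => rfl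
    have Rapp : ∀ (u : Unitization ℂ A) (x : E), Rx u x = u.fst • x + r u.snd x := fun u x => rfl
    have Dapp : ∀ (u : Unitization ℂ A) (x : E), Dx u x = D u.snd x := fun u x => rfl
    have hLx : ∀ (u v : Unitization ℂ A) (x : E), Lx (u * v) x = Lx u (Lx v x) := by
      intro u v x
      rw [Lapp, Lapp, Lapp, Unitization.fst_mul, Unitization.snd_mul]
      rw [map_add, map_add, map_smul, map_smul]
      simp only [ContinuousLinearMap.add_apply, ContinuousLinearMap.smul_apply]
      rw [hl u.snd v.snd x]
      rw [map_add, map_smul, smul_add, smul_smul]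
      abel
    have hRx : ∀ (u v : Unitization ℂ A) (x : E), Rx (u * v) x = Rx v (Rx u x) := by
      intro u v x
      rw [Rapp, Rapp, Rapp, Unitization.fst_mul, Unitization.snd_mul]
      rw [map_add, map_add, map_smul, map_smul]
      simp only [ContinuousLinearMap.add_apply, ContinuousLinearMap.smul_apply]
      rw [hr u.snd v.snd x]
      rw [map_add, map_smul, smul_add, smul_smul, mul_comm v.fst u.fst]
      abel
    have hCx : ∀ (u v : Unitization ℂ A) (x : E), Lx u (Rx v x) = Rx v (Lx u x) := by
      intro u v x
      rw [Rapp, Lapp, Lapp, Rapp]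
      rw [map_add, map_smul, map_add, map_smul]
      rw [hcm u.snd v.snd x]
      rw [smul_add, smul_add, smul_smul, smul_smul, mul_comm v.fst u.fst]
      abel
    have hbLx : ∃ (n : ℕ) (c : ℝ), ∀ (u : Unitization ℂ A) (x : E),
        ‖Lx u x‖ ≤ c * pe n u * ‖x‖ := by
      refine ⟨n1, max c1 1, fun u x => ?_⟩
      rw [Lapp, hpe]
      calc ‖u.fst • x + l u.snd x‖ ≤ ‖u.fst • x‖ + ‖l u.snd x‖ := norm_add_le _ _
        _ ≤ ‖u.fst‖ * ‖x‖ + c1 * p n1 u.snd * ‖x‖ := by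
            rw [norm_smul]; exact add_le_add le_rfl (hc1 u.snd x)
        _ ≤ (max c1 1 * ‖u.fst‖) * ‖x‖ + (max c1 1 * p n1 u.snd) * ‖x‖ :=
            add_le_add
              (mul_le_mul_of_nonneg_right
                (le_mul_of_one_le_left (norm_nonneg _) (le_max_right c1 1)) (norm_nonneg x))
              (mul_le_mul_of_nonneg_right
                (mul_le_mul_of_nonneg_right (le_max_left c1 1) (pnn n1 u.snd)) (norm_nonneg x))
        _ = max c1 1 * (‖u.fst‖ + p n1 u.snd) * ‖x‖ := by ring
    have hbRx : ∃ (n : ℕ) (c : ℝ), ∀ (u : Unitization ℂ A) (x : E),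
        ‖Rx u x‖ ≤ c * pe n u * ‖x‖ := by
      refine ⟨n2, max c2 1, fun u x => ?_⟩
      rw [Rapp, hpe]
      calc ‖u.fst • x + r u.snd x‖ ≤ ‖u.fst • x‖ + ‖r u.snd x‖ := norm_add_le _ _
        _ ≤ ‖u.fst‖ * ‖x‖ + c2 * p n2 u.snd * ‖x‖ := by
            rw [norm_smul]; exact add_le_add le_rfl (hc2 u.snd x)
        _ ≤ (max c2 1 * ‖u.fst‖) * ‖x‖ + (max c2 1 * p n2 u.snd) * ‖x‖ :=
            add_le_add
              (mul_le_mul_of_nonneg_right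
                (le_mul_of_one_le_left (norm_nonneg _) (le_max_right c2 1)) (norm_nonneg x))
              (mul_le_mul_of_nonneg_right
                (mul_le_mul_of_nonneg_right (le_max_left c2 1) (pnn n2 u.snd)) (norm_nonneg x))
        _ = max c2 1 * (‖u.fst‖ + p n2 u.snd) * ‖x‖ := by ring
    have hannx : ∀ u ∈ (Unitization.inr : A → Unitization ℂ A) '' I, ∀ x : E,
        Lx u x = 0 ∧ Rx u x = 0 := by
      rintro _ ⟨a, ha, rfl⟩ x
      constructor
      · rw [Lapp, Unitization.fst_inr, Unitization.snd_inr, zero_smul, zero_add]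
        exact (hann a ha x).1
      · rw [Rapp, Unitization.fst_inr, Unitization.snd_inr, zero_smul, zero_add]
        exact (hann a ha x).2
    have hbDx : ∃ (n : ℕ) (c : ℝ), ∀ u : Unitization ℂ A, ‖Dx u‖ ≤ c * pe n u := by
      refine ⟨n3, max c3 0, fun u => ?_⟩
      rw [hpe]
      have h1 : ‖Dx u‖ = ‖D u.snd‖ := rfl
      rw [h1]
      calc ‖D u.snd‖ ≤ c3 * p n3 u.snd := hc3 _
        _ ≤ max c3 0 * p n3 u.snd :=
            mul_le_mul_of_nonneg_right (le_max_left _ _) (pnn _ _)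
        _ ≤ max c3 0 * (‖u.fst‖ + p n3 u.snd) := by
            have h0 : (0:ℝ) ≤ max c3 0 := le_max_right c3 0
            have h2 : p n3 u.snd ≤ ‖u.fst‖ + p n3 u.snd := by
              have := norm_nonneg u.fst; linarith
            exact mul_le_mul_of_nonneg_left h2 h0
    have hderx : ∀ (u v : Unitization ℂ A) (x : E),
        Dx (u * v) x = Dx v (Rx u x) + Dx u (Lx v x) := by
      intro u v x
      rw [Dapp, Dapp, Dapp, Rapp, Lapp, Unitization.snd_mul]
      rw [map_add, map_add, map_smul, map_smul]
      simp only [ContinuousLinearMap.add_apply, ContinuousLinearMap.smul_apply]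
      rw [map_add, map_add, map_smul, map_smul]
      rw [hder u.snd v.snd x]
      simp only [smul_eq_mul]
      ring
    obtain ⟨φ, hφ⟩ := hAe E Lx Rx hLx hRx hCx hbLx hbRx hannx Dx hbDx hderx
    refine ⟨φ, fun a ha x => ?_⟩
    have hmem : (Unitization.inr a : Unitization ℂ A) ∉
        (Unitization.inr : A → Unitization ℂ A) '' I := by
      rintro ⟨b, hb, hba⟩
      exact ha (Unitization.inr_injective hba ▸ hb)
    have hx := hφ (Unitization.inr a) hmem x
    rw [Dapp, Rapp, Lapp, Unitization.fst_inr, Unitization.snd_inr,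
      zero_smul, zero_add, zero_add] at hx
    exact hx
end

section
/- Let A be a Fréchet algebra, I a closed ideal of A, and J a closed ideal of A contained in I. If A is amenable modulo I, then A/J is amenable modulo I/J. -/
open Filter Topology

set_option maxHeartbeats 1000000 in
/-- Let `A` be a Fréchet algebra, `I` a closed ideal of `A`,
and `J` a closed ideal of `A` contained in `I`.  If `A` is amenable modulo
`I`, then the quotient Fréchet algebra `A/J` is amenable modulo `I/J`. -/
theorem quotient_amenable_modulo
    {A : Type*} [Ring A] [Algebra ℂ A]
    (p : ℕ → RingSeminorm A) (hmono : ∀ (n : ℕ) (a : A), p n a ≤ p (n + 1) a)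
    (I J : Set A) (hJI : J ⊆ I)
    (hIclosed : ∀ a : A, (∀ n : ℕ, ∀ ε > (0:ℝ), ∃ b ∈ I, p n (a - b) < ε) → a ∈ I)
    (hJclosed : ∀ a : A, (∀ n : ℕ, ∀ ε > (0:ℝ), ∃ b ∈ J, p n (a - b) < ε) → a ∈ J)
    -- the quotient Fréchet algebra `A/J` ...
    (QDJ : FrechetQuot A p J)
    -- ... with its quotient seminorms, as submultiplicative seminorms
    (pJ : ℕ → RingSeminorm QDJ.Q) (hpJ : ∀ (n : ℕ) (x : QDJ.Q), pJ n x = QDJ.pq n x) :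
    AmenableModulo A p I →
      AmenableModulo QDJ.Q pJ (QDJ.q '' I) := by

  intro hA
  intro E _ _ _ l r hlm hrm hcomm hlc hrc hann D hDc hder
  have h0J : (0:A) ∈ J := (QDJ.ker_eq 0).mp (map_zero QDJ.q)
  have hpJle : ∀ (n : ℕ) (a : A), pJ n (QDJ.q a) ≤ p n a := by
    intro n a
    rw [hpJ, QDJ.pq_eq]
    apply csInf_le
    · exact ⟨0, by rintro x ⟨b, hb, rfl⟩; exact apply_nonneg _ _⟩
    · exact ⟨0, h0J, by simp⟩
  set lA : A →ₗ[ℂ] E →L[ℂ] E := l.comp QDJ.q.toLinearMap with hlA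
  set rA : A →ₗ[ℂ] E →L[ℂ] E := r.comp QDJ.q.toLinearMap with hrA
  set DA : A →ₗ[ℂ] (E →L[ℂ] ℂ) := D.comp QDJ.q.toLinearMap with hDA
  have hq : ∀ a b : A, QDJ.q (a * b) = QDJ.q a * QDJ.q b := map_mul QDJ.q
  have H1 : ∀ (a b : A) (x : E), lA (a * b) x = lA a (lA b x) := by
    intro a b x
    show l (QDJ.q (a*b)) x = l (QDJ.q a) (l (QDJ.q b) x)
    rw [hq]; exact hlm _ _ _
  have H2 : ∀ (a b : A) (x : E), rA (a * b) x = rA b (rA a x) := by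
    intro a b x
    show r (QDJ.q (a*b)) x = r (QDJ.q b) (r (QDJ.q a) x)
    rw [hq]; exact hrm _ _ _
  have H3 : ∀ (a b : A) (x : E), lA a (rA b x) = rA b (lA a x) := fun a b x =>
    hcomm (QDJ.q a) (QDJ.q b) x
  have H4 : ∃ (n : ℕ) (c : ℝ), ∀ (a : A) (x : E), ‖lA a x‖ ≤ c * p n a * ‖x‖ := by
    obtain ⟨n, c, hc⟩ := hlc
    refine ⟨n, |c|, fun a x => ?_⟩
    calc ‖lA a x‖ ≤ c * pJ n (QDJ.q a) * ‖x‖ := hc _ _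
      _ ≤ |c| * pJ n (QDJ.q a) * ‖x‖ :=
          mul_le_mul_of_nonneg_right
            (mul_le_mul_of_nonneg_right (le_abs_self c) (apply_nonneg _ _)) (norm_nonneg x)
      _ ≤ |c| * p n a * ‖x‖ :=
          mul_le_mul_of_nonneg_right
            (mul_le_mul_of_nonneg_left (hpJle n a) (abs_nonneg c)) (norm_nonneg x)
  have H5 : ∃ (n : ℕ) (c : ℝ), ∀ (a : A) (x : E), ‖rA a x‖ ≤ c * p n a * ‖x‖ := by
    obtain ⟨n, c, hc⟩ := hrc
    refine ⟨n, |c|, fun a x => ?_⟩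
    calc ‖rA a x‖ ≤ c * pJ n (QDJ.q a) * ‖x‖ := hc _ _
      _ ≤ |c| * pJ n (QDJ.q a) * ‖x‖ :=
          mul_le_mul_of_nonneg_right
            (mul_le_mul_of_nonneg_right (le_abs_self c) (apply_nonneg _ _)) (norm_nonneg x)
      _ ≤ |c| * p n a * ‖x‖ :=
          mul_le_mul_of_nonneg_right
            (mul_le_mul_of_nonneg_left (hpJle n a) (abs_nonneg c)) (norm_nonneg x)
  have H6 : ∀ a ∈ I, ∀ x : E, lA a x = 0 ∧ rA a x = 0 := fun a ha x =>
    hann (QDJ.q a) ⟨a, ha, rfl⟩ x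
  have H7 : ∃ (n : ℕ) (c : ℝ), ∀ a : A, ‖DA a‖ ≤ c * p n a := by
    obtain ⟨n, c, hc⟩ := hDc
    refine ⟨n, |c|, fun a => ?_⟩
    calc ‖DA a‖ ≤ c * pJ n (QDJ.q a) := hc _
      _ ≤ |c| * pJ n (QDJ.q a) :=
          mul_le_mul_of_nonneg_right (le_abs_self c) (apply_nonneg _ _)
      _ ≤ |c| * p n a := mul_le_mul_of_nonneg_left (hpJle n a) (abs_nonneg c)
  have H8 : ∀ (a b : A) (x : E), DA (a * b) x = DA b (rA a x) + DA a (lA b x) := by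
    intro a b x
    show D (QDJ.q (a*b)) x = D (QDJ.q b) (r (QDJ.q a) x) + D (QDJ.q a) (l (QDJ.q b) x)
    rw [hq]; exact hder _ _ _
  obtain ⟨φ, hφ⟩ := hA E lA rA H1 H2 H3 H4 H5 H6 DA H7 H8
  refine ⟨φ, fun y hy x => ?_⟩
  obtain ⟨a, rfl⟩ := QDJ.surj y
  have haI : a ∉ I := fun h => hy ⟨a, h, rfl⟩
  exact hφ a haI x
end
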